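/- arXiv:1303.2453 — 2 statements merged into one kernel-verified Lean document; each statement's English description precedes it below -/
import Mathlib

section
/- Let c₁=(q₁,s₁) and c₂=(q₂,s₂) be configurations of a level-2 collapsible pushdown system and ρ ∈ Runs(c₁,c₂). Let t be the minimal substack of s₁ such that ρ visits t, let m₁ := Pop₂^{|s₁|−|t|}(s₁) and m₂ := Pop₂^{|s₂|−|t|}(s₂). Then ρ decomposes as ρ = ρ₁∘ρ₂∘ρ₃∘ρ₄ where: ρ₁ ∈ Runs(s₁,m₁) does not visit any substack of m₁ before its final configuration; ρ₂ ∈ Runs(m₁,t) does not visit any substack of t before its final configuration; ρ₃ ∈ Runs(t,m₂) does not visit a substack of Pop₁(t); and ρ₄ ∈ Runs(m₂,s₂) does not visit any substack of m₂ after its initial configuration. -/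
namespace CPG

/-! ## Level-2 collapsible pushdown stacks -/

/-- Stack letters: `Sum.inl σ` is a letter with a level-1 link,
`Sum.inr (σ, k)` is a letter with a level-2 link to the substack of width `k`. -/
abbrev Letter (A : Type) := A ⊕ (A × ℕ)

def symOf {A : Type} : Letter A → A
  | Sum.inl a => a
  | Sum.inr (a, _) => a

def lvlOf {A : Type} : Letter A → ℕ
  | Sum.inl _ => 1
  | Sum.inr _ => 2

abbrev Word (A : Type) := List (Letter A)

/-- A 2-word: a list of words; the last word is the topmost one. -/
abbrev Stack2 (A : Type) := List (Word A)

/-- The initial level-2 stack `⊥₂`. -/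
def bottom2 {A : Type} (bot : A) : Stack2 A := [[Sum.inl bot]]

def top2 {A : Type} (s : Stack2 A) : Option (Word A) := s.getLast?

def top1 {A : Type} (s : Stack2 A) : Option (Letter A) := s.getLast?.bind List.getLast?

def symS {A : Type} (s : Stack2 A) : Option A := (top1 s).map symOf

def lvlS {A : Type} (s : Stack2 A) : Option ℕ := (top1 s).map lvlOf

def lnkS {A : Type} (s : Stack2 A) : Option ℕ :=
  match top1 s, top2 s with
  | some (Sum.inr (_, j)), _ => some j
  | some (Sum.inl _), some w => some (w.length - 1)
  | _, _ => none

def clone2 {A : Type} (s : Stack2 A) : Option (Stack2 A) :=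
  (top2 s).map fun w => s ++ [w]

def push1 {A : Type} [DecidableEq A] (bot a : A) (s : Stack2 A) : Option (Stack2 A) :=
  if a = bot then none else (top2 s).map fun w => s.dropLast ++ [w ++ [Sum.inl a]]

def push2 {A : Type} [DecidableEq A] (bot a : A) (s : Stack2 A) : Option (Stack2 A) :=
  if a = bot then none else
    (top2 s).map fun w => s.dropLast ++ [w ++ [Sum.inr (a, s.length - 1)]]

def pop2 {A : Type} (s : Stack2 A) : Option (Stack2 A) :=
  if 1 < s.length then some s.dropLast else none

def pop1 {A : Type} (s : Stack2 A) : Option (Stack2 A) :=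
  match s.getLast? with
  | some w => if 1 < w.length then some (s.dropLast ++ [w.dropLast]) else none
  | none => none

def collapse {A : Type} (s : Stack2 A) : Option (Stack2 A) :=
  match top1 s with
  | some (Sum.inr (_, k)) => if 0 < k then some (s.take k) else none
  | some (Sum.inl _) => pop1 s
  | none => none

/-- The level-2 stack operations. -/
inductive Op (A : Type) where
  | clone2 | pop1 | pop2 | collapse
  | push1 (a : A) | push2 (a : A)

def applyOp {A : Type} [DecidableEq A] (bot : A) : Op A → Stack2 A → Option (Stack2 A)
  | .clone2 => clone2
  | .pop1 => pop1
  | .pop2 => pop2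
  | .collapse => collapse
  | .push1 a => push1 bot a
  | .push2 a => push2 bot a

/-- `Stacks(Σ)` : the smallest set containing `⊥₂` and closed under the operations. -/
inductive IsStack {A : Type} [DecidableEq A] (bot : A) : Stack2 A → Prop where
  | base : IsStack bot (bottom2 bot)
  | step {s t : Stack2 A} (op : Op A) : IsStack bot s → applyOp bot op s = some t →
      IsStack bot t

/-- Iterated application of a partial stack operation. -/
def iter {A : Type} (f : Stack2 A → Option (Stack2 A)) : ℕ → Stack2 A → Option (Stack2 A)
  | 0, s => some s
  | n + 1, s => (f s).bind (iter f n)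

/-- `t` is a substack of `s`: `t = Pop₁ⁿ(Pop₂ᵐ(s))`. -/
def Substack {A : Type} (t s : Stack2 A) : Prop :=
  ∃ n m, (iter pop2 m s).bind (iter pop1 n) = some t

def ProperSubstack {A : Type} (t s : Stack2 A) : Prop := Substack t s ∧ t ≠ s

/-- `s` is a prefix of `t` (`s ⊑ t`). -/
def StackPrefix {A : Type} (s t : Stack2 A) : Prop :=
  s ≠ [] ∧ s.length ≤ t.length ∧ s.dropLast <+: t ∧
    ∀ j, s.length - 1 ≤ j → j < t.length → s.getLastD [] <+: t.getD j []

/-- `t[s/u]` : the stack obtained from `t` by replacing the prefix `s` by `u`. -/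
def substPrefix {A : Type} (t s u : Stack2 A) : Stack2 A :=
  u.dropLast ++
    (t.drop (s.length - 1)).map fun v => u.getLastD [] ++ v.drop (s.getLastD []).length

/-! ## Collapsible pushdown systems and runs -/

/-- A level-2 collapsible pushdown system. -/
structure CPS (Q A Γ : Type) where
  bot : A
  q0 : Q
  Δ : Set (Q × A × Γ × Q × Op A)

variable {Q A Γ : Type} [DecidableEq A]

/-- A `γ`-labelled transition realized by the operation `op`. -/
def TransOp (S : CPS Q A Γ) (γ : Γ) (op : Op A) (c c' : Q × Stack2 A) : Prop :=
  ∃ σ : A, symS c.2 = some σ ∧ (c.1, σ, γ, c'.1, op) ∈ S.Δ ∧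
    applyOp S.bot op c.2 = some c'.2

def Trans (S : CPS Q A Γ) (γ : Γ) (c c' : Q × Stack2 A) : Prop :=
  ∃ op, TransOp S γ op c c'

/-- A run of a collapsible pushdown system (recording configurations, labels and
operations of each step). -/
structure Run (S : CPS Q A Γ) where
  len : ℕ
  cfg : ℕ → Q × Stack2 A
  lab : ℕ → Γ
  op : ℕ → Op A
  ok : ∀ i, i < len → TransOp S (lab i) (op i) (cfg i) (cfg (i + 1))

def Run.stk {S : CPS Q A Γ} (ρ : Run S) (i : ℕ) : Stack2 A := (ρ.cfg i).2

/-- The word of labels along a run. -/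
def Run.labels {S : CPS Q A Γ} (ρ : Run S) : List Γ :=
  List.ofFn fun i : Fin ρ.len => ρ.lab i

/-- `Reach_L`-reachability: a run from `c` to `c'` labelled by a word in `L`. -/
def ReachL (S : CPS Q A Γ) (L : Language Γ) (c c' : Q × Stack2 A) : Prop :=
  ∃ ρ : Run S, ρ.cfg 0 = c ∧ ρ.cfg ρ.len = c' ∧ ρ.labels ∈ L

/-- Plain reachability. -/
def Reach (S : CPS Q A Γ) (c c' : Q × Stack2 A) : Prop :=
  ∃ ρ : Run S, ρ.cfg 0 = c ∧ ρ.cfg ρ.len = c'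

/-! ## ε-contraction -/

def oneLetterLang (γ : Γ) : Language Γ := {[γ]}

def nonEpsLang (eps : Γ) : Language Γ := {w | ∃ γ : Γ, γ ≠ eps ∧ w = [γ]}

/-- The language `{ε}*`. -/
def epsStar (eps : Γ) : Language Γ := KStar.kstar (oneLetterLang eps)

/-- The language `({ε}*(Γ∖{ε}))*`. -/
def domLang (eps : Γ) : Language Γ :=
  KStar.kstar (epsStar eps * nonEpsLang eps)

/-- The language `{ε}*γ`. -/
def edgeLang (eps γ : Γ) : Language Γ := epsStar eps * oneLetterLang γ

/-- The vertex set of the ε-contraction `G/ε`. -/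
def EpsDomain (S : CPS Q A Γ) (eps : Γ) : Set (Q × Stack2 A) :=
  {c | ReachL S (domLang eps) (S.q0, bottom2 S.bot) c}

/-! ## (Generalised) milestones and the order ≪ -/

/-- `wordAt bot s i` is the word `wᵢ` of `s`, with the convention `w₀ = ⊥`. -/
def wordAt {A : Type} (bot : A) (s : Stack2 A) (i : ℕ) : Word A :=
  if i = 0 then [Sum.inl bot] else s.getD (i - 1) []

/-- Longest common prefix of two words. -/
def lcp {α : Type} [DecidableEq α] : List α → List α → List α
  | a :: s, b :: t => if a = b then a :: lcp s t else []
  | _, _ => []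

/-- `m` is a generalised milestone of `s`. -/
def GenMilestone (bot : A) (s m : Stack2 A) : Prop :=
  ∃ i v, i < s.length ∧ m = s.take i ++ [v] ∧
    lcp (wordAt bot s i) (wordAt bot s (i + 1)) <+: v ∧
    (v <+: wordAt bot s i ∨ v <+: wordAt bot s (i + 1))

/-- `m` is a milestone of `s`. -/
def Milestone (bot : A) (s m : Stack2 A) : Prop :=
  ∃ i v, i < s.length ∧ m = s.take i ++ [v] ∧
    lcp (wordAt bot s i) (wordAt bot s (i + 1)) <+: v ∧
    v <+: wordAt bot s (i + 1)

def genMilestones (bot : A) (s : Stack2 A) : Set (Stack2 A) := {m | GenMilestone bot s m}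

def milestones (bot : A) (s : Stack2 A) : Set (Stack2 A) := {m | Milestone bot s m}

/-- The base cases of the partial order `≪`. -/
def llBase (bot : A) (s t : Stack2 A) : Prop :=
  s.length < t.length ∨
    (s ≠ [] ∧ s.length = t.length ∧ s.dropLast = t.dropLast ∧
      ((t.getLastD [] <+: s.getLastD [] ∧ t.getLastD [] ≠ s.getLastD [] ∧
          s.getLastD [] <+: wordAt bot s (s.length - 1)) ∨
        (s.getLastD [] <+: t.getLastD [] ∧ s.getLastD [] ≠ t.getLastD [] ∧
          ¬ t.getLastD [] <+: wordAt bot s (s.length - 1))))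

/-- The order `≪`: the smallest reflexive transitive relation containing `llBase`. -/
def ll (bot : A) : Stack2 A → Stack2 A → Prop := Relation.ReflTransGen (llBase bot)

/-- `m'` is the ≪-successor of `m` within `genMilestones bot s`. -/
def LlSuccessor (bot : A) (s m m' : Stack2 A) : Prop :=
  GenMilestone bot s m ∧ GenMilestone bot s m' ∧ m ≠ m' ∧ ll bot m m' ∧
    ∀ m'', GenMilestone bot s m'' → ll bot m m'' → m'' ≠ m → ll bot m' m''

/-! ## Loops, returns and 1-loops -/

/-- The segment `[i,j]` of `ρ` is a loop (of its initial stack). -/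
def LoopSeg {S : CPS Q A Γ} (ρ : Run S) (i j : ℕ) : Prop :=
  i ≤ j ∧ j ≤ ρ.len ∧ ρ.stk j = ρ.stk i ∧
    (∀ k, i ≤ k → k ≤ j → ∀ t, pop2 (ρ.stk i) = some t → ¬ Substack (ρ.stk k) t) ∧
    (∀ k, i ≤ k → k ≤ j → ∀ m, 0 < m → ∀ t, iter pop1 m (ρ.stk i) = some t →
      ρ.stk k = t → ∀ m', m' < m → ∃ t', iter pop1 m' (ρ.stk i) = some t' ∧
        lvlS t' = some 1)

/-- A high loop: a loop that never visits `Pop₁` of its stack. -/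
def HighLoopSeg {S : CPS Q A Γ} (ρ : Run S) (i j : ℕ) : Prop :=
  LoopSeg ρ i j ∧ ∀ k, i ≤ k → k ≤ j → ∀ t, pop1 (ρ.stk i) = some t → ρ.stk k ≠ t

/-- A low loop: a loop whose second and second-to-last stacks are `Pop₁` of its stack. -/
def LowLoopSeg {S : CPS Q A Γ} (ρ : Run S) (i j : ℕ) : Prop :=
  LoopSeg ρ i j ∧ i < j ∧
    ∃ t, pop1 (ρ.stk i) = some t ∧ ρ.stk (i + 1) = t ∧ ρ.stk (j - 1) = t

/-- The common part of the definition of a return on the segment `[i,j]`: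
it leads from its initial stack `t` to `Pop₂(t)` and never visits a substack
of `Pop₂(t)` before its final configuration. -/
def RetShell {S : CPS Q A Γ} (ρ : Run S) (i j : ℕ) : Prop :=
  i < j ∧ j ≤ ρ.len ∧ pop2 (ρ.stk i) = some (ρ.stk j) ∧
    ∀ k, i ≤ k → k < j → ¬ Substack (ρ.stk k) (ρ.stk j)

/-- The segment `[i,j]` of `ρ` is a return (from its initial stack `t` to `Pop₂(t)`). -/
inductive RetSeg {S : CPS Q A Γ} (ρ : Run S) : ℕ → ℕ → Prop where
  | pop2 {i j : ℕ} (h : RetShell ρ i j) (hop : ρ.op (j - 1) = Op.pop2) : RetSeg ρ i j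
  | collapse {i j : ℕ} (h : RetShell ρ i j) (hop : ρ.op (j - 1) = Op.collapse)
      (hpre : ∃ w w', top2 (ρ.stk i) = some w ∧ top2 (ρ.stk (j - 1)) = some w' ∧
        w <+: w' ∧ w ≠ w') : RetSeg ρ i j
  | sub {i k j : ℕ} (h : RetShell ρ i j) (hik : i < k) (hkj : k ≤ j)
      (hpop : pop1 (ρ.stk i) = some (ρ.stk k)) (hret : RetSeg ρ k j) : RetSeg ρ i j

/-- The segment `[i,j]` of `ρ` is a level-1-loop. -/
def OneLoopSeg {S : CPS Q A Γ} (ρ : Run S) (i j : ℕ) : Prop :=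
  i ≤ j ∧ j ≤ ρ.len ∧
    ∃ (s : Stack2 A) (w : Word A) (s' : Stack2 A),
      ρ.stk i = s ++ [w] ∧ ρ.stk j = s ++ s' ++ [w] ∧
      (∀ k, i ≤ k → k ≤ j → s.length < (ρ.stk k).length) ∧
      (∀ k, i ≤ k → k ≤ j → 1 < w.length → top2 (ρ.stk k) = some w.dropLast →
        ∃ m, k < m ∧ m ≤ j ∧ RetSeg ρ k m)

/-! ## ExRet, ExLoop, ... -/

/-- `w↓₀` : replace every level-2 link by `0`. -/
def down0 {A : Type} : Word A → Word A :=
  List.map fun a => match a with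
    | Sum.inl x => Sum.inl x
    | Sum.inr (x, _) => Sum.inr (x, 0)

def ExRet (S : CPS Q A Γ) (w : Word A) : Set (Q × Q) :=
  {p | ∃ ρ : Run S, ρ.cfg 0 = (p.1, [down0 w, down0 w]) ∧
    ρ.cfg ρ.len = (p.2, [down0 w]) ∧ RetSeg ρ 0 ρ.len}

def ExLoop (S : CPS Q A Γ) (w : Word A) : Set (Q × Q) :=
  {p | ∃ ρ : Run S, ρ.cfg 0 = (p.1, [down0 w]) ∧ ρ.cfg ρ.len = (p.2, [down0 w]) ∧
    LoopSeg ρ 0 ρ.len}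

def ExHLoop (S : CPS Q A Γ) (w : Word A) : Set (Q × Q) :=
  {p | ∃ ρ : Run S, ρ.cfg 0 = (p.1, [down0 w]) ∧ ρ.cfg ρ.len = (p.2, [down0 w]) ∧
    HighLoopSeg ρ 0 ρ.len}

def ExLLoop (S : CPS Q A Γ) (w : Word A) : Set (Q × Q) :=
  {p | ∃ ρ : Run S, ρ.cfg 0 = (p.1, [down0 w]) ∧ ρ.cfg ρ.len = (p.2, [down0 w]) ∧
    LowLoopSeg ρ 0 ρ.len}

def ExOneLoop (S : CPS Q A Γ) (w : Word A) : Set (Q × Q) :=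
  {p | ∃ (ρ : Run S) (s' : Stack2 A), ρ.cfg 0 = (p.1, [down0 w]) ∧
    ρ.cfg ρ.len = (p.2, s' ++ [down0 w]) ∧ OneLoopSeg ρ 0 ρ.len}

/-! ## Finite binary trees -/

/-- Finite binary trees with labels in `α` and optional left/right children. -/
inductive PTree (α : Type) where
  | node (a : α) (l r : Option (PTree α)) : PTree α

/-- The label of the node at address `d` (`false` = left/0, `true` = right/1). -/
def PTree.labelAt {α : Type} : PTree α → List Bool → Option α
  | .node a _ _, [] => some a
  | .node _ (some t) _, false :: d => t.labelAt d
  | .node _ none _, false :: _ => none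
  | .node _ _ (some t), true :: d => t.labelAt d
  | .node _ _ none, true :: _ => none

def PTree.map {α β : Type} (f : α → β) : PTree α → PTree β
  | .node a l r =>
    .node (f a)
      (match l with | none => none | some t => some (t.map f))
      (match r with | none => none | some t => some (t.map f))

/-- Convolution of two trees, with `none` as padding symbol `□`. -/
def PTree.conv {α β : Type} : PTree α → PTree β → PTree (Option α × Option β)
  | .node a l r, .node b l' r' =>
    .node (some a, some b)
      (match l, l' with
        | none, none => none
        | some t, none => some (t.map fun x => (some x, none))
        | none, some u => some (u.map fun x => (none, some x))
        | some t, some u => some (PTree.conv t u))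
      (match r, r' with
        | none, none => none
        | some t, none => some (t.map fun x => (some x, none))
        | none, some u => some (u.map fun x => (none, some x))
        | some t, some u => some (PTree.conv t u))

/-- A (bottom-up nondeterministic) finite tree automaton. -/
structure TreeAut (α : Type) where
  St : Type
  fin : Finite St
  qI : St
  F : Set St
  Δ : Set (St × α × St × St)

/-- Acceptance of a finite tree by a tree automaton. -/
def TreeAut.Accepts {α : Type} (M : TreeAut α) (t : PTree α) : Prop :=
  ∃ ρ : List Bool → M.St,
    (∀ d, t.labelAt d = none → ρ d = M.qI) ∧
    (∀ d a, t.labelAt d = some a → (ρ d, a, ρ (d ++ [false]), ρ (d ++ [true])) ∈ M.Δ) ∧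
    ρ [] ∈ M.F

/-- A family of binary relations on `B` is tree-automatic. -/
def IsTreeAutomatic {B : Type} {I : Type} (E : I → B → B → Prop) : Prop :=
  ∃ (α : Type) (_ : Finite α) (AB : TreeAut α) (AE : I → TreeAut (Option α × Option α))
    (f : {t : PTree α // AB.Accepts t} → B),
    Function.Bijective f ∧
      ∀ (i : I) (t₁ t₂ : {t : PTree α // AB.Accepts t}),
        (AE i).Accepts (PTree.conv t₁.1 t₂.1) ↔ E i (f t₁) (f t₂)

/-! ## The encoding of configurations as trees -/

/-- Labels of encoding trees: a state, a pair (symbol, link level), or `ε`. -/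
abbrev EncLabel (Q A : Type) := Q ⊕ ((A × ℕ) ⊕ Unit)

def epsLab {Q A : Type} : EncLabel Q A := Sum.inr (Sum.inr ())

def symLab {Q A : Type} (τ : Letter A) : EncLabel Q A := Sum.inr (Sum.inl (symOf τ, lvlOf τ))

/-- Encoding of blocklines as trees (with a fuel parameter driving the recursion;
the fuel used in `encStack` is large enough so that it never runs out on actual
blocklines). The left subtree encodes the blockline induced by the first maximal
block, the right subtree the remaining blocks. -/
def encBL (Q : Type) {A : Type} [DecidableEq A] :
    ℕ → EncLabel Q A → List (Word A) → PTree (EncLabel Q A)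
  | 0, σ, _ => .node σ none none
  | _ + 1, σ, [] => .node σ none none
  | fuel + 1, σ, w :: rest =>
    if w.length ≤ 1 then
      match rest with
      | [] => .node σ none none
      | _ :: _ => .node σ none (some (encBL Q fuel epsLab rest))
    else
      let p : Word A → Bool := fun v => decide (v.take 2 = w.take 2)
      let blk := (w :: rest).takeWhile p
      let restBlk := (w :: rest).dropWhile p
      .node σ
        (some (encBL Q fuel
          (match w[1]? with | some τ' => symLab τ' | none => epsLab)
          (blk.map List.tail)))
        (match restBlk with
          | [] => none
          | _ :: _ => some (encBL Q fuel epsLab restBlk))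

/-- The total number of letters of a 2-word. -/
def size2 {A : Type} (s : Stack2 A) : ℕ := (s.map List.length).sum

/-- The encoding `Enc(s) = Enc(s, (⊥,1))` of a stack. -/
def encStack (Q : Type) {A : Type} [DecidableEq A] (bot : A) (s : Stack2 A) :
    PTree (EncLabel Q A) :=
  encBL Q (size2 s + 1) (Sum.inr (Sum.inl (bot, 1))) s

/-- The encoding of a configuration: the state at the root, `Enc(s)` as left subtree. -/
def Enc {Q A : Type} [DecidableEq A] (bot : A) (c : Q × Stack2 A) : PTree (EncLabel Q A) :=
  .node (Sum.inl c.1) (some (encStack Q bot c.2)) none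

/-- The class `EncTrees` of encoding trees. -/
def EncTrees (Q A : Type) (bot : A) : Set (PTree (EncLabel Q A)) :=
  {T | (∃ q : Q, T.labelAt [] = some (Sum.inl q)) ∧
    T.labelAt [true] = none ∧ T.labelAt [false] ≠ none ∧
    T.labelAt [false] = some (Sum.inr (Sum.inl (bot, 1))) ∧
    (∀ (d : List Bool) (x : EncLabel Q A),
      T.labelAt (false :: (d ++ [false])) = some x →
        ∃ (σ : A) (l : ℕ), σ ≠ bot ∧ (l = 1 ∨ l = 2) ∧ x = Sum.inr (Sum.inl (σ, l))) ∧
    (∀ (d : List Bool) (x : EncLabel Q A), T.labelAt (d ++ [true]) = some x → x = epsLab) ∧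
    (∀ (d : List Bool) (σ : A), ¬ (T.labelAt (d ++ [false]) = some (Sum.inr (Sum.inl (σ, 1))) ∧
      T.labelAt (d ++ [true, false]) = some (Sum.inr (Sum.inl (σ, 1)))))}

/-- Restriction of a tree to the nodes lexicographically ≤ `d`. -/
def restrictLex {α : Type} : PTree α → List Bool → PTree α
  | .node a _ _, [] => .node a none none
  | .node a l _, false :: d =>
      .node a (match l with | none => none | some t => some (restrictLex t d)) none
  | .node a l r, true :: d =>
      .node a l (match r with | none => none | some t => some (restrictLex t d))

/-- The lexicographic order on tree addresses. -/
def lexLe (d e : List Bool) : Prop :=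
  d <+: e ∨ ∃ (c x y : List Bool), d = c ++ false :: x ∧ e = c ++ true :: y

/-! ## Deterministic finite automata with output (Moore machines) -/

structure Moore (α ω : Type) where
  St : Type
  fin : Finite St
  init : St
  step : St → α → St
  out : St → ω

def Moore.output {α ω : Type} (M : Moore α ω) (w : List α) : ω :=
  M.out (w.foldl M.step M.init)


/-! ### Auxiliary lemmas for Statement 7 -/

section Statement7Aux

variable {A : Type} [DecidableEq A]

lemma size2_append (a b : Stack2 A) : size2 (a ++ b) = size2 a + size2 b := by
  simp [size2]

lemma getLast?_ne_nil' {s : Stack2 A} {w : Word A} (h : s.getLast? = some w) : s ≠ [] := by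
  intro hs; subst hs; simp at h

lemma getLast?_mem' {s : Stack2 A} {w : Word A} (h : s.getLast? = some w) : w ∈ s := by
  have hs := getLast?_ne_nil' h
  have h2 := List.getLast?_eq_getLast hs
  rw [h] at h2
  have hw : w = s.getLast hs := Option.some.inj h2
  rw [hw]; exact List.getLast_mem hs

lemma pop2_eq_some {s u : Stack2 A} (h : pop2 s = some u) :
    1 < s.length ∧ u = s.dropLast := by
  unfold pop2 at h
  split at h
  · exact ⟨‹_›, (Option.some.inj h).symm⟩
  · simp at h

lemma pop2_defined {s : Stack2 A} (h : 1 < s.length) : pop2 s = some s.dropLast := by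
  unfold pop2; rw [if_pos h]

lemma pop1_eq_some {s u : Stack2 A} (h : pop1 s = some u) :
    ∃ w, s.getLast? = some w ∧ 1 < w.length ∧ u = s.dropLast ++ [w.dropLast] := by
  unfold pop1 at h
  split at h
  · rename_i w hw
    split at h
    · rename_i hlt
      exact ⟨w, hw, hlt, (Option.some.inj h).symm⟩
    · simp at h
  · simp at h

lemma pop1_length {s u : Stack2 A} (h : pop1 s = some u) : u.length = s.length := by
  obtain ⟨w, hw, _, rfl⟩ := pop1_eq_some h
  have hs := getLast?_ne_nil' hw
  have h1 : 0 < s.length := List.length_pos_iff.mpr hs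
  simp [List.length_dropLast]
  omega

lemma iter_pop1_length {n : ℕ} {s u : Stack2 A} (h : iter pop1 n s = some u) :
    u.length = s.length := by
  induction n generalizing s with
  | zero => simp [iter] at h; subst h; rfl
  | succ n ih =>
      simp only [iter] at h
      rw [Option.bind_eq_some_iff] at h
      obtain ⟨v, hv, hvu⟩ := h
      rw [ih hvu, pop1_length hv]

lemma iter_pop2_eq_some {m : ℕ} {s u : Stack2 A} (h : iter pop2 m s = some u) :
    u = s.take (s.length - m) ∧ (m = 0 ∨ m < s.length) := by
  induction m generalizing s with
  | zero =>
      simp [iter] at h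
      subst h
      refine ⟨?_, Or.inl rfl⟩
      rw [Nat.sub_zero, List.take_length]
  | succ m ih =>
      simp only [iter] at h
      rw [Option.bind_eq_some_iff] at h
      obtain ⟨v, hv, hvu⟩ := h
      obtain ⟨h1, rfl⟩ := pop2_eq_some hv
      obtain ⟨hu, hm⟩ := ih hvu
      have hdl : s.dropLast.length = s.length - 1 := List.length_dropLast
      rw [hdl] at hm
      constructor
      · rw [hu, hdl, List.dropLast_eq_take, List.take_take, min_eq_left (by omega)]
        congr 1
        omega
      · right
        omega

lemma iter_pop2_defined {m : ℕ} {s : Stack2 A} (h : m < s.length) :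
    iter pop2 m s = some (s.take (s.length - m)) := by
  induction m generalizing s with
  | zero => simp [iter, List.take_length]
  | succ m ih =>
      simp only [iter]
      rw [pop2_defined (by omega)]
      have hdl : s.dropLast.length = s.length - 1 := List.length_dropLast
      rw [Option.bind_some, ih (by rw [hdl]; omega)]
      congr 1
      rw [hdl, List.dropLast_eq_take, List.take_take, min_eq_left (by omega)]
      congr 1
      omega

lemma pop1_size {s u : Stack2 A} (h : pop1 s = some u) : size2 u + 1 = size2 s := by
  obtain ⟨w, hw, hwl, rfl⟩ := pop1_eq_some h
  have hs := getLast?_ne_nil' hw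
  have hgl : w = s.getLast hs := by
    have h2 := List.getLast?_eq_getLast hs
    rw [hw] at h2
    exact Option.some.inj h2
  conv_rhs => rw [← List.dropLast_append_getLast hs]
  rw [size2_append, size2_append, ← hgl]
  have h1 : size2 [w.dropLast] = w.length - 1 := by simp [size2]
  have h2 : size2 [w] = w.length := by simp [size2]
  omega

/-- Stacks with nonempty words. -/
def GoodS (s : Stack2 A) : Prop := s ≠ [] ∧ ∀ w ∈ s, w ≠ []

lemma step_shape {bot : A} {op : Op A} {s r : Stack2 A} (hg : GoodS s)
    (h : applyOp bot op s = some r) :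
    (∃ w, w ≠ [] ∧ r = s ++ [w]) ∨
    (∃ w, w ≠ [] ∧ r = s.dropLast ++ [w]) ∨
    (1 < s.length ∧ r = s.dropLast) ∨
    (∃ i, 1 ≤ i ∧ i < s.length ∧ r = s.take i) := by
  have hpop1 : pop1 s = some r → (∃ w, w ≠ [] ∧ r = s.dropLast ++ [w]) := by
    intro h1
    obtain ⟨w, hw, hwl, rfl⟩ := pop1_eq_some h1
    refine ⟨w.dropLast, ?_, rfl⟩
    have : w.dropLast.length = w.length - 1 := List.length_dropLast
    intro hnil
    rw [hnil] at this
    simp at this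
    omega
  cases op with
  | clone2 =>
      simp only [applyOp] at h
      unfold clone2 top2 at h
      rw [Option.map_eq_some_iff] at h
      obtain ⟨w, hw, he⟩ := h
      exact Or.inl ⟨w, hg.2 w (getLast?_mem' hw), he.symm⟩
  | pop1 =>
      simp only [applyOp] at h
      exact Or.inr (Or.inl (hpop1 h))
  | pop2 =>
      simp only [applyOp] at h
      exact Or.inr (Or.inr (Or.inl (pop2_eq_some h)))
  | push1 a =>
      simp only [applyOp] at h
      unfold push1 top2 at h
      split at h
      · simp at h
      · rw [Option.map_eq_some_iff] at h
        obtain ⟨w, hw, he⟩ := h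
        exact Or.inr (Or.inl ⟨w ++ [Sum.inl a], by simp, he.symm⟩)
  | push2 a =>
      simp only [applyOp] at h
      unfold push2 top2 at h
      split at h
      · simp at h
      · rw [Option.map_eq_some_iff] at h
        obtain ⟨w, hw, he⟩ := h
        exact Or.inr (Or.inl ⟨w ++ [Sum.inr (a, s.length - 1)], by simp, he.symm⟩)
  | collapse =>
      simp only [applyOp] at h
      unfold collapse at h
      cases htop : top1 s with
      | none =>
          rw [htop] at h
          simp at h
      | some τ =>
          rw [htop] at h
          cases τ with
          | inl a =>
              have h' : pop1 s = some r := h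
              exact Or.inr (Or.inl (hpop1 h'))
          | inr p =>
              obtain ⟨a, k⟩ := p
              have h' : (if 0 < k then some (s.take k) else none) = some r := h
              split at h'
              · have hr : r = s.take k := (Option.some.inj h').symm
                by_cases hk : k < s.length
                · exact Or.inr (Or.inr (Or.inr ⟨k, by omega, hk, hr⟩))
                · have hrs : r = s := by
                    rw [hr, List.take_of_length_le (by omega)]
                  refine Or.inr (Or.inl ⟨s.getLast hg.1, hg.2 _ (List.getLast_mem hg.1), ?_⟩)
                  rw [hrs]
                  exact (List.dropLast_append_getLast hg.1).symm
              · simp at h'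

lemma isStack_good {bot : A} {s : Stack2 A} (h : IsStack bot s) : GoodS s := by
  induction h with
  | base =>
      refine ⟨by simp [bottom2], ?_⟩
      intro w hw
      simp [bottom2] at hw
      simp [hw]
  | step op hs happ =>
      rename_i s' t' ih
      rcases step_shape ih happ with ⟨w, hw, he⟩ | ⟨w, hw, he⟩ | ⟨h1, he⟩ | ⟨i, hi1, hi2, he⟩
      · subst he
        refine ⟨by simp, ?_⟩
        intro v hv
        rcases List.mem_append.mp hv with h2 | h2
        · exact ih.2 v h2
        · simp at h2; subst h2; exact hw
      · subst he
        refine ⟨by simp, ?_⟩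
        intro v hv
        rcases List.mem_append.mp hv with h2 | h2
        · exact ih.2 v (List.dropLast_subset _ h2)
        · simp at h2; subst h2; exact hw
      · subst he
        have hlen : 0 < s'.dropLast.length := by
          rw [List.length_dropLast]; omega
        exact ⟨List.length_pos_iff.mp hlen, fun v hv => ih.2 v (List.dropLast_subset _ hv)⟩
      · subst he
        have hpos : 0 < s'.length := List.length_pos_iff.mpr ih.1
        refine ⟨?_, fun v hv => ih.2 v (List.take_subset _ _ hv)⟩
        apply List.length_pos_iff.mp
        rw [List.length_take]
        exact lt_min_iff.mpr ⟨by omega, hpos⟩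

lemma substack_length {u v : Stack2 A} (h : Substack u v) : u.length ≤ v.length := by
  obtain ⟨n, m, h⟩ := h
  rw [Option.bind_eq_some_iff] at h
  obtain ⟨w, hw, hu⟩ := h
  rw [iter_pop1_length hu]
  obtain ⟨rfl, _⟩ := iter_pop2_eq_some hw
  rw [List.length_take]
  exact min_le_right _ _

lemma iter_pop2_isStack {bot : A} {m : ℕ} {s u : Stack2 A} (hs : IsStack bot s)
    (h : iter pop2 m s = some u) : IsStack bot u := by
  induction m generalizing s with
  | zero => simp [iter] at h; subst h; exact hs
  | succ m ih =>
      simp only [iter] at h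
      rw [Option.bind_eq_some_iff] at h
      obtain ⟨v, hv, hvu⟩ := h
      exact ih (IsStack.step Op.pop2 hs hv) hvu

lemma iter_pop1_isStack {bot : A} {n : ℕ} {s u : Stack2 A} (hs : IsStack bot s)
    (h : iter pop1 n s = some u) : IsStack bot u := by
  induction n generalizing s with
  | zero => simp [iter] at h; subst h; exact hs
  | succ n ih =>
      simp only [iter] at h
      rw [Option.bind_eq_some_iff] at h
      obtain ⟨v, hv, hvu⟩ := h
      exact ih (IsStack.step Op.pop1 hs hv) hvu

lemma substack_isStack {bot : A} {u v : Stack2 A} (hv : IsStack bot v) (h : Substack u v) :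
    IsStack bot u := by
  obtain ⟨n, m, h⟩ := h
  rw [Option.bind_eq_some_iff] at h
  obtain ⟨w, hw, hu⟩ := h
  exact iter_pop1_isStack (iter_pop2_isStack hv hw) hu

lemma pop2_size {bot : A} {s u : Stack2 A} (hs : IsStack bot s) (h : pop2 s = some u) :
    size2 u < size2 s := by
  have hg := isStack_good hs
  obtain ⟨hl, rfl⟩ := pop2_eq_some h
  have hne : s ≠ [] := hg.1
  have hlast : (s.getLast hne).length ≠ 0 := by
    intro h0
    exact hg.2 _ (List.getLast_mem hne) (List.eq_nil_of_length_eq_zero h0)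
  conv_rhs => rw [← List.dropLast_append_getLast hne]
  rw [size2_append]
  have h2 : size2 [s.getLast hne] = (s.getLast hne).length := by simp [size2]
  omega

lemma iter_pop2_size {bot : A} {m : ℕ} {s u : Stack2 A} (hs : IsStack bot s)
    (h : iter pop2 m s = some u) : size2 u + m ≤ size2 s := by
  induction m generalizing s with
  | zero => simp [iter] at h; subst h; omega
  | succ m ih =>
      simp only [iter] at h
      rw [Option.bind_eq_some_iff] at h
      obtain ⟨v, hv, hvu⟩ := h
      have h1 := pop2_size hs hv
      have h2 := ih (IsStack.step Op.pop2 hs hv) hvu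
      omega

lemma iter_pop1_size {n : ℕ} {s u : Stack2 A} (h : iter pop1 n s = some u) :
    size2 u + n = size2 s := by
  induction n generalizing s with
  | zero => simp [iter] at h; subst h; omega
  | succ n ih =>
      simp only [iter] at h
      rw [Option.bind_eq_some_iff] at h
      obtain ⟨v, hv, hvu⟩ := h
      have h1 := pop1_size hv
      have h2 := ih hvu
      omega

lemma substack_size {bot : A} {u v : Stack2 A} (hv : IsStack bot v) (h : Substack u v) :
    size2 u ≤ size2 v ∧ (size2 v ≤ size2 u → u = v) := by
  obtain ⟨n, m, h⟩ := h
  rw [Option.bind_eq_some_iff] at h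
  obtain ⟨w, hw, hu⟩ := h
  have h1 := iter_pop2_size hv hw
  have h2 := iter_pop1_size hu
  refine ⟨by omega, fun hle => ?_⟩
  have hm : m = 0 := by omega
  have hn : n = 0 := by omega
  subst hm; subst hn
  simp [iter] at hw hu
  rw [← hu, ← hw]

lemma pop2_pop1 {s u : Stack2 A} (h : pop1 s = some u) : pop2 u = pop2 s := by
  obtain ⟨w, hw, hwl, rfl⟩ := pop1_eq_some h
  have hs := getLast?_ne_nil' hw
  have h1 : 0 < s.length := List.length_pos_iff.mpr hs
  unfold pop2
  rw [List.dropLast_concat]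
  have hlen : (s.dropLast ++ [w.dropLast]).length = s.length := by
    simp [List.length_dropLast]; omega
  rw [hlen]

lemma iter_pop1_pop2 {n : ℕ} {s u : Stack2 A} (h : iter pop1 n s = some u) :
    pop2 u = pop2 s := by
  induction n generalizing s with
  | zero => simp [iter] at h; subst h; rfl
  | succ n ih =>
      simp only [iter] at h
      rw [Option.bind_eq_some_iff] at h
      obtain ⟨v, hv, hvu⟩ := h
      rw [ih hvu, pop2_pop1 hv]

lemma iter_bind (f : Stack2 A → Option (Stack2 A)) (a b : ℕ) (s : Stack2 A) :
    iter f (a + b) s = (iter f a s).bind (iter f b) := by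
  induction a generalizing s with
  | zero => simp [iter]
  | succ a ih =>
      rw [Nat.succ_add]
      simp only [iter]
      cases f s with
      | none => rfl
      | some u => simp only [Option.bind_some]; exact ih u

lemma substack_trans {u v w : Stack2 A} (h1 : Substack u v) (h2 : Substack v w) :
    Substack u w := by
  obtain ⟨n, m, h1⟩ := h1
  obtain ⟨n', m', h2⟩ := h2
  rw [Option.bind_eq_some_iff] at h1 h2
  obtain ⟨v₁, hv₁, hu⟩ := h1
  obtain ⟨w₁, hw₁, hv⟩ := h2
  cases m with
  | zero =>
      simp [iter] at hv₁
      subst hv₁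
      refine ⟨n' + n, m', ?_⟩
      rw [Option.bind_eq_some_iff]
      refine ⟨w₁, hw₁, ?_⟩
      rw [iter_bind, hv]
      simpa using hu
  | succ m0 =>
      have hcomm : pop2 v = pop2 w₁ := iter_pop1_pop2 hv
      have hit : iter pop2 (m0 + 1) w₁ = some v₁ := by
        simp only [iter] at hv₁ ⊢
        rw [← hcomm]
        exact hv₁
      refine ⟨n, m' + (m0 + 1), ?_⟩
      rw [Option.bind_eq_some_iff]
      refine ⟨v₁, ?_, hu⟩
      rw [iter_bind, hw₁]
      simpa using hit

lemma substack_take {s : Stack2 A} {j : ℕ} (h1 : 1 ≤ j) (h2 : j ≤ s.length) :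
    Substack (s.take j) s := by
  refine ⟨0, s.length - j, ?_⟩
  rw [iter_pop2_defined (by omega), show s.length - (s.length - j) = j by omega]
  simp [iter]

lemma take_step {bot : A} {op : Op A} {v r : Stack2 A} (hg : GoodS v)
    (h : applyOp bot op v = some r) {L : ℕ} (hL : 1 ≤ L) (hLv : L ≤ v.length) :
    (r.take (L-1) = v.take (L-1) ∧ L ≤ r.length ∧ (L < v.length → r.take L = v.take L)) ∨
    (∃ i, 1 ≤ i ∧ i < L ∧ r = v.take i) := by
  have hvlen : 1 ≤ v.length := le_trans hL hLv
  rcases step_shape hg h with ⟨w, hw, he⟩ | ⟨w, hw, he⟩ | ⟨h1, he⟩ | ⟨i, hi1, hi2, he⟩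
  · left
    subst he
    refine ⟨List.take_append_of_le_length (by omega), by simp; omega,
      fun _ => List.take_append_of_le_length hLv⟩
  · left
    subst he
    have hdl : v.dropLast.length = v.length - 1 := List.length_dropLast
    refine ⟨?_, by simp [List.length_dropLast]; omega, fun hlt => ?_⟩
    · rw [List.take_append_of_le_length (by omega), List.dropLast_eq_take, List.take_take,
        min_eq_left (by omega)]
    · rw [List.take_append_of_le_length (by omega), List.dropLast_eq_take, List.take_take,
        min_eq_left (by omega)]
  · subst he
    have hdl : v.dropLast.length = v.length - 1 := List.length_dropLast
    by_cases hcase : L < v.length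
    · left
      refine ⟨?_, by omega, fun _ => ?_⟩
      · rw [List.dropLast_eq_take, List.take_take, min_eq_left (by omega)]
      · rw [List.dropLast_eq_take, List.take_take, min_eq_left (by omega)]
    · right
      have hveq : v.length = L := le_antisymm (le_of_not_gt hcase) hLv
      refine ⟨L - 1, by omega, by omega, ?_⟩
      rw [List.dropLast_eq_take, hveq]
  · subst he
    by_cases hcase : i < L
    · exact Or.inr ⟨i, hi1, hcase, rfl⟩
    · left
      have hLi : L ≤ i := le_of_not_gt hcase
      refine ⟨?_, ?_, fun _ => ?_⟩
      · rw [List.take_take, min_eq_left (by omega)]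
      · rw [List.length_take, min_eq_left (le_of_lt hi2)]; omega
      · rw [List.take_take, min_eq_left hLi]

end Statement7Aux

/-- Every run decomposes into four parts `ρ₁∘ρ₂∘ρ₃∘ρ₄` through the
minimal visited substack `t` of its initial stack. -/
theorem general_run_decomposition
    {Q A Γ : Type} [DecidableEq A] (S : CPS Q A Γ) (ρ : Run S)
    (q₁ q₂ : Q) (s₁ s₂ t : Stack2 A)
    (hs₁ : IsStack S.bot s₁)
    (h0 : ρ.cfg 0 = (q₁, s₁)) (hlast : ρ.cfg ρ.len = (q₂, s₂))
    (hts : Substack t s₁) (hvis : ∃ i, i ≤ ρ.len ∧ ρ.stk i = t)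
    (hmin : ∀ t', Substack t' s₁ → (∃ i, i ≤ ρ.len ∧ ρ.stk i = t') → Substack t t') :
    ∃ m₁ m₂ i₁ i₂ i₃,
      iter pop2 (s₁.length - t.length) s₁ = some m₁ ∧
      iter pop2 (s₂.length - t.length) s₂ = some m₂ ∧
      i₁ ≤ i₂ ∧ i₂ ≤ i₃ ∧ i₃ ≤ ρ.len ∧
      ρ.stk i₁ = m₁ ∧ ρ.stk i₂ = t ∧ ρ.stk i₃ = m₂ ∧
      (∀ k, k < i₁ → ¬ Substack (ρ.stk k) m₁) ∧
      (∀ k, i₁ ≤ k → k < i₂ → ¬ Substack (ρ.stk k) t) ∧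
      (∀ k, i₂ ≤ k → k ≤ i₃ → ∀ t', pop1 t = some t' → ¬ Substack (ρ.stk k) t') ∧
      (∀ k, i₃ < k → k ≤ ρ.len → ¬ Substack (ρ.stk k) m₂) := by
  classical
  have hstk0 : ρ.stk 0 = s₁ := by simp [Run.stk, h0]
  have hstklen : ρ.stk ρ.len = s₂ := by simp [Run.stk, hlast]
  have happly : ∀ k, k < ρ.len → ∃ op, applyOp S.bot op (ρ.stk k) = some (ρ.stk (k+1)) := by
    intro k hk
    obtain ⟨σ, _, _, hap⟩ := ρ.ok k hk
    exact ⟨ρ.op k, hap⟩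
  have hrunIs : ∀ k, k ≤ ρ.len → IsStack S.bot (ρ.stk k) := by
    intro k
    induction k with
    | zero => intro _; rw [hstk0]; exact hs₁
    | succ k ih =>
        intro hk
        obtain ⟨op, hop⟩ := happly k (by omega)
        exact IsStack.step op (ih (by omega)) hop
  have hrunGood : ∀ k, k ≤ ρ.len → GoodS (ρ.stk k) :=
    fun k hk => isStack_good (hrunIs k hk)
  -- decompose t as pop1-iterate of m₁
  obtain ⟨n, m, hb⟩ := id hts
  rw [Option.bind_eq_some_iff] at hb
  obtain ⟨m₁, hm₁iter, hm₁t⟩ := hb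
  obtain ⟨hm₁eq, hmrange⟩ := iter_pop2_eq_some hm₁iter
  have hm_le : m ≤ s₁.length := by rcases hmrange with h | h <;> omega
  set L := t.length with hLdef
  have hLm₁ : m₁.length = L := (iter_pop1_length hm₁t).symm
  have hm₁len : m₁.length = s₁.length - m := by
    rw [hm₁eq, List.length_take]
    exact min_eq_left (by omega)
  have hLs₁ : L ≤ s₁.length := by omega
  have hmL : s₁.length - L = m := by omega
  have hm₁take : m₁ = s₁.take L := by rw [hm₁eq]; congr 1; omega
  have htIs : IsStack S.bot t := substack_isStack hs₁ hts
  have htGood : GoodS t := isStack_good htIs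
  have hL1 : 1 ≤ L := by
    have := List.length_pos_iff.mpr htGood.1
    omega
  -- no visited stack is strictly below t
  have hkey : ∀ k, k ≤ ρ.len → Substack (ρ.stk k) t → ρ.stk k = t := by
    intro k hk hsub
    have h1 : Substack (ρ.stk k) s₁ := substack_trans hsub hts
    have h2 : Substack t (ρ.stk k) := hmin _ h1 ⟨k, hk, rfl⟩
    have hsz1 := substack_size htIs hsub
    have hsz2 := substack_size (hrunIs k hk) h2
    exact hsz1.2 (by omega)
  -- i₂ : first visit of t
  set i₂ := Nat.find hvis with hi₂def
  have hi₂ : i₂ ≤ ρ.len ∧ ρ.stk i₂ = t := Nat.find_spec hvis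
  have hi₂min : ∀ k, k < i₂ → ¬(k ≤ ρ.len ∧ ρ.stk k = t) := fun k hk => Nat.find_min hvis hk
  -- i₁ : first time the width drops to L
  have hex₁ : ∃ i, i ≤ i₂ ∧ (ρ.stk i).length ≤ L := ⟨i₂, le_refl _, by rw [hi₂.2]⟩
  set i₁ := Nat.find hex₁ with hi₁def
  have hi₁ : i₁ ≤ i₂ ∧ (ρ.stk i₁).length ≤ L := Nat.find_spec hex₁
  have hi₁min : ∀ k, k < i₁ → k ≤ i₂ → L < (ρ.stk k).length := by
    intro k hk hk2
    by_contra hcon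
    exact Nat.find_min hex₁ hk ⟨hk2, by omega⟩
  have hInv₁ : ∀ k, k ≤ i₁ → (ρ.stk k).take L = m₁ := by
    intro k
    induction k with
    | zero => intro _; rw [hstk0, hm₁take]
    | succ k ih =>
        intro hk
        have hk' : k < i₁ := by omega
        have hkL : L < (ρ.stk k).length := hi₁min k hk' (by omega)
        have hklen : k + 1 ≤ ρ.len := by omega
        obtain ⟨op, hop⟩ := happly k (by omega)
        have htk : (ρ.stk k).take L = m₁ := ih (by omega)
        rcases take_step (hrunGood k (by omega)) hop hL1 (le_of_lt hkL) with
          ⟨_, _, e3⟩ | ⟨i, hi1, hi2, hr⟩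
        · rw [e3 hkL, htk]
        · exfalso
          have hrt : ρ.stk (k+1) = s₁.take i := by
            rw [hr]
            calc (ρ.stk k).take i = ((ρ.stk k).take L).take i := by
                  rw [List.take_take, min_eq_left (by omega)]
              _ = (s₁.take L).take i := by rw [htk, hm₁take]
              _ = s₁.take i := by rw [List.take_take, min_eq_left (by omega)]
          have hsub : Substack (ρ.stk (k+1)) s₁ := by
            rw [hrt]; exact substack_take hi1 (by omega)
          have h5 := hmin _ hsub ⟨k+1, hklen, rfl⟩
          have h6 := substack_length h5
          rw [hrt, List.length_take, min_eq_left (by omega)] at h6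
          omega
  have hstki₁ : ρ.stk i₁ = m₁ := by
    have h1 := hInv₁ i₁ (le_refl _)
    have h2 : L ≤ (ρ.stk i₁).length := by
      have h3 : ((ρ.stk i₁).take L).length = L := by rw [h1, hLm₁]
      rw [List.length_take] at h3
      rcases le_total L (ρ.stk i₁).length with h4 | h4
      · exact h4
      · rw [min_eq_right h4] at h3; omega
    have h3 : (ρ.stk i₁).length = L := le_antisymm hi₁.2 h2
    rw [← h1, ← h3, List.take_length]
  have hc2 : ∀ k, k < i₁ → ¬ Substack (ρ.stk k) m₁ := by
    intro k hk hsub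
    have h1 := substack_length hsub
    have h2 := hi₁min k hk (by omega)
    omega
  -- second invariant, after i₂
  have hInv₂ : ∀ k, i₂ ≤ k → k ≤ ρ.len →
      (ρ.stk k).take (L-1) = t.take (L-1) ∧ L ≤ (ρ.stk k).length := by
    intro k hk
    induction k, hk using Nat.le_induction with
    | base => intro _; rw [hi₂.2]; exact ⟨rfl, hLdef.le⟩
    | succ k hk ih =>
        intro hk1
        obtain ⟨ht1, ht2⟩ := ih (by omega)
        obtain ⟨op, hop⟩ := happly k (by omega)
        rcases take_step (hrunGood k (by omega)) hop hL1 ht2 with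
          ⟨e1, e2, _⟩ | ⟨i, hi1, hi2, hr⟩
        · exact ⟨by rw [e1, ht1], e2⟩
        · exfalso
          have hrt : ρ.stk (k+1) = t.take i := by
            rw [hr]
            calc (ρ.stk k).take i = ((ρ.stk k).take (L-1)).take i := by
                  rw [List.take_take, min_eq_left (by omega)]
              _ = (t.take (L-1)).take i := by rw [ht1]
              _ = t.take i := by rw [List.take_take, min_eq_left (by omega)]
          have hsub : Substack (ρ.stk (k+1)) t := by
            rw [hrt]; exact substack_take hi1 (by omega)
          have h5 := hmin _ (substack_trans hsub hts) ⟨k+1, by omega, rfl⟩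
          have h6 := substack_length h5
          rw [hrt, List.length_take, min_eq_left (by omega)] at h6
          omega
  have hs₂fact : s₂.take (L-1) = t.take (L-1) ∧ L ≤ s₂.length := by
    have := hInv₂ ρ.len hi₂.1 (le_refl _)
    rwa [hstklen] at this
  have hs₂len : L ≤ s₂.length := hs₂fact.2
  set m₂ := s₂.take L with hm₂def
  have hm₂iter : iter pop2 (s₂.length - L) s₂ = some m₂ := by
    have h1 : s₂.length - L < s₂.length := by omega
    have h2 := iter_pop2_defined h1
    rwa [show s₂.length - (s₂.length - L) = L by omega] at h2
  have hm₂len : m₂.length = L := by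
    rw [hm₂def, List.length_take]
    exact min_eq_left hs₂len
  -- i₃ : last time the width is L
  set Qp : ℕ → Prop := fun k => i₂ ≤ k ∧ (ρ.stk k).length ≤ L with hQpdef
  set i₃ := Nat.findGreatest Qp ρ.len with hi₃def
  have hQi₂ : Qp i₂ := ⟨le_refl _, by rw [hi₂.2]⟩
  have hQ : Qp i₃ := Nat.findGreatest_spec hi₂.1 hQi₂
  have hi₃len : i₃ ≤ ρ.len := Nat.findGreatest_le ρ.len
  have hi₃gt : ∀ k, i₃ < k → k ≤ ρ.len → L < (ρ.stk k).length := by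
    intro k h1 h2
    by_contra hcon
    exact Nat.findGreatest_is_greatest h1 h2 ⟨le_trans hQ.1 (le_of_lt h1), by omega⟩
  have hi₃L : (ρ.stk i₃).length = L := le_antisymm hQ.2 (hInv₂ i₃ hQ.1 hi₃len).2
  -- after i₃ the L-prefix never changes
  have hclaim2 : ∀ d, i₃ < ρ.len - d → (ρ.stk (ρ.len - d)).take L = m₂ := by
    intro d
    induction d with
    | zero => intro _; rw [Nat.sub_zero, hstklen]
    | succ d ih =>
        intro hd
        set k := ρ.len - (d+1) with hkdef
        have hk1 : k + 1 = ρ.len - d := by omega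
        have hklt : k < ρ.len := by omega
        have hw1 : L < (ρ.stk k).length := hi₃gt k hd (by omega)
        have hw2 : L < (ρ.stk (k+1)).length := hi₃gt (k+1) (by omega) (by omega)
        have hIH : (ρ.stk (k+1)).take L = m₂ := by rw [hk1]; exact ih (by omega)
        obtain ⟨op, hop⟩ := happly k hklt
        rcases take_step (hrunGood k (by omega)) hop hL1 (le_of_lt hw1) with
          ⟨_, _, e3⟩ | ⟨i, hi1, hi2, hr⟩
        · rw [← e3 hw1]; exact hIH
        · exfalso
          have : (ρ.stk (k+1)).length = i := by
            rw [hr, List.length_take]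
            exact min_eq_left (by omega)
          omega
  have hclaim2' : ∀ k, i₃ < k → k ≤ ρ.len → (ρ.stk k).take L = m₂ := by
    intro k h1 h2
    have h3 := hclaim2 (ρ.len - k) (by omega)
    rwa [show ρ.len - (ρ.len - k) = k by omega] at h3
  have hstki₃ : ρ.stk i₃ = m₂ := by
    rcases eq_or_lt_of_le hi₃len with heq | hlt
    · have hl2 : s₂.length = L := by
        have := hi₃L
        rwa [heq, hstklen] at this
      rw [heq, hstklen, hm₂def, ← hl2, List.take_length]
    · obtain ⟨op, hop⟩ := happly i₃ hlt
      have hr : (ρ.stk (i₃+1)).take L = m₂ := hclaim2' (i₃+1) (by omega) (by omega)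
      have hwr : L < (ρ.stk (i₃+1)).length := hi₃gt (i₃+1) (by omega) (by omega)
      rcases step_shape (hrunGood i₃ hi₃len) hop with
        ⟨w, hw, he⟩ | ⟨w, hw, he⟩ | ⟨h1, he⟩ | ⟨i, hi1, hi2, he⟩
      · rw [he, List.take_append_of_le_length (by omega)] at hr
        rw [← hr, ← hi₃L, List.take_length]
      · exfalso
        have hvne : ρ.stk i₃ ≠ [] := (hrunGood i₃ hi₃len).1
        have hvpos : 0 < (ρ.stk i₃).length := List.length_pos_iff.mpr hvne
        have hlen2 : (ρ.stk (i₃+1)).length = (ρ.stk i₃).length := by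
          rw [he]
          simp [List.length_dropLast]
          omega
        omega
      · exfalso
        have hlen2 : (ρ.stk (i₃+1)).length = (ρ.stk i₃).length - 1 := by
          rw [he, List.length_dropLast]
        omega
      · exfalso
        have hlen2 : (ρ.stk (i₃+1)).length = i := by
          rw [he, List.length_take]
          exact min_eq_left (le_of_lt hi2)
        omega
  -- the four no-visit conditions
  have hc3 : ∀ k, i₁ ≤ k → k < i₂ → ¬ Substack (ρ.stk k) t := by
    intro k _ hk hsub
    have hkl : k ≤ ρ.len := by omega
    exact hi₂min k hk ⟨hkl, hkey k hkl hsub⟩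
  have hc4 : ∀ k, i₂ ≤ k → k ≤ i₃ → ∀ t', pop1 t = some t' → ¬ Substack (ρ.stk k) t' := by
    intro k hk1 hk2 t' hp hsub
    have ht' : Substack t' t := ⟨1, 0, by simp [iter, hp]⟩
    have hkl : k ≤ ρ.len := le_trans hk2 hi₃len
    have heq : ρ.stk k = t := hkey k hkl (substack_trans hsub ht')
    rw [heq] at hsub
    have h1 := pop1_size hp
    have ht'Is : IsStack S.bot t' := IsStack.step Op.pop1 htIs hp
    have h2 := (substack_size ht'Is hsub).1
    omega
  have hc5 : ∀ k, i₃ < k → k ≤ ρ.len → ¬ Substack (ρ.stk k) m₂ := by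
    intro k h1 h2 hsub
    have h3 := substack_length hsub
    have h4 := hi₃gt k h1 h2
    omega
  refine ⟨m₁, m₂, i₁, i₂, i₃, ?_, ?_, hi₁.1, hQ.1, hi₃len, hstki₁, hi₂.2, hstki₃,
    hc2, hc3, hc4, hc5⟩
  · rw [show s₁.length - t.length = m from hmL]
    exact hm₁iter
  · exact hm₂iter

end CPG
end

section
/- For each level-2 stack s, the relation ≪ restricted to genMilestones(s) is a finite linear order. Moreover, if m ∈ genMilestones(s), then (genMilestones(m),≪) is exactly the initial segment of (genMilestones(s),≪) up to m. -/
namespace CPG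

variable {Q A Γ : Type} [DecidableEq A]

/-! ### Auxiliary lemmas for Statement 8 -/

theorem lcp_prefix_left {α : Type} [DecidableEq α] : ∀ a b : List α, lcp a b <+: a
  | [], _ => by simp [lcp]
  | _ :: _, [] => by simp [lcp]
  | a :: s, b :: t => by
    by_cases h : a = b
    · simpa [lcp, h, List.cons_prefix_cons] using lcp_prefix_left s t
    · simp [lcp, h]

theorem lcp_prefix_right {α : Type} [DecidableEq α] : ∀ a b : List α, lcp a b <+: b
  | [], _ => by simp [lcp]
  | _ :: _, [] => by simp [lcp]
  | a :: s, b :: t => by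
    by_cases h : a = b
    · subst h; simpa [lcp, List.cons_prefix_cons] using lcp_prefix_right s t
    · simp [lcp, h]

theorem prefix_lcp {α : Type} [DecidableEq α] :
    ∀ {c a b : List α}, c <+: a → c <+: b → c <+: lcp a b
  | [], _, _, _, _ => List.nil_prefix
  | x :: c, a, b, ha, hb => by
    obtain ⟨ta, rfl⟩ := ha
    obtain ⟨tb, hb'⟩ := hb
    rw [List.cons_append] at hb' ⊢
    cases b with
    | nil => simp at hb'
    | cons y b =>
      obtain ⟨rfl, hb2⟩ : x = y ∧ c ++ tb = b := by
        refine ⟨?_, ?_⟩ <;> injection hb'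
      simp only [lcp, if_pos rfl, if_true]
      rw [List.cons_prefix_cons]
      exact ⟨rfl, prefix_lcp ⟨ta, rfl⟩ ⟨tb, hb2⟩⟩

theorem prefixSet_finite {α : Type} (w : List α) : {v : List α | v <+: w}.Finite := by
  classical
  apply Set.Finite.subset (Set.finite_mem_finset w.inits.toFinset)
  intro v hv
  simp only [List.mem_toFinset, List.mem_inits, Finset.mem_coe]
  exact hv

section Stack

variable {A : Type} [DecidableEq A]

theorem take_concat_length {s : Stack2 A} {i : ℕ} (hi : i ≤ s.length) (v : Word A) :
    (s.take i ++ [v]).length = i + 1 := by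
  simp [Nat.min_eq_left hi]

theorem take_concat_take {s : Stack2 A} {j i : ℕ} (hj : j ≤ i) (hi : i ≤ s.length) (v : Word A) :
    (s.take i ++ [v]).take j = s.take j := by
  rw [List.take_append_of_le_length (by simp; omega), List.take_take, Nat.min_eq_left hj]

theorem wordAt_take_lt (bot : A) {s : Stack2 A} {j i : ℕ} (hj : j ≤ i) (hi : i ≤ s.length)
    (v : Word A) : wordAt bot (s.take i ++ [v]) j = wordAt bot s j := by
  unfold wordAt
  rcases Nat.eq_zero_or_pos j with rfl | hz
  · simp
  · rw [if_neg (by omega), if_neg (by omega),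
      List.getD_append _ _ _ _ (by simp; omega)]
    have hlt : j - 1 < i := by omega
    simp [List.getD_eq_getElem?_getD, List.getElem?_take, hlt]

theorem wordAt_take_top (bot : A) {s : Stack2 A} {i : ℕ} (hi : i ≤ s.length) (v : Word A) :
    wordAt bot (s.take i ++ [v]) (i + 1) = v := by
  unfold wordAt
  rw [if_neg (by omega)]
  have hl : (s.take i).length = i := by simp [Nat.min_eq_left hi]
  rw [List.getD_eq_getElem?_getD, Nat.add_sub_cancel, List.getElem?_append_right (by omega)]
  simp [hl]

/-- The rank `δ` of a stack: negative if its topmost word is a prefix of the previous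
word (descending phase), positive otherwise (ascending phase). -/
def delta (bot : A) (m : Stack2 A) : ℤ :=
  if m.getLastD [] <+: wordAt bot m (m.length - 1) then -((m.getLastD []).length : ℤ)
  else ((m.getLastD []).length : ℤ)

theorem delta_take (bot : A) {s : Stack2 A} {i : ℕ} (hi : i ≤ s.length) (v : Word A) :
    delta bot (s.take i ++ [v]) =
      if v <+: wordAt bot s i then -(v.length : ℤ) else (v.length : ℤ) := by
  unfold delta
  rw [take_concat_length hi, Nat.add_sub_cancel, wordAt_take_lt bot le_rfl hi]
  simp

theorem wordAt_concat_prev (bot : A) (d : Stack2 A) (x y : Word A) :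
    wordAt bot (d ++ [x]) d.length = wordAt bot (d ++ [y]) d.length := by
  unfold wordAt
  rcases Nat.eq_zero_or_pos d.length with hz | hp
  · simp [hz]
  · rw [if_neg (by omega : ¬ d.length = 0), if_neg (by omega : ¬ d.length = 0),
      List.getD_append _ _ _ _ (by omega), List.getD_append _ _ _ _ (by omega)]

/-- The strict rank order: `llBase` steps strictly increase `(length, δ)`. -/
def Klt (bot : A) (s t : Stack2 A) : Prop :=
  s.length < t.length ∨ (s.length = t.length ∧ delta bot s < delta bot t)

theorem llBase_klt {bot : A} {s t : Stack2 A} (h : llBase bot s t) : Klt bot s t := by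
  rcases h with h | ⟨hne, hlen, hdrop, hcase⟩
  · exact Or.inl h
  · right
    rcases List.eq_nil_or_concat s with rfl | ⟨d, a, rfl⟩
    · exact absurd rfl hne
    rcases List.eq_nil_or_concat t with rfl | ⟨e, b, rfl⟩
    · simp at hlen
    simp only [List.concat_eq_append] at hlen hdrop hcase ⊢
    replace hdrop : d = e := by simpa using hdrop
    subst hdrop
    refine ⟨hlen, ?_⟩
    unfold delta
    simp only [List.getLastD_concat] at hcase
    simp only [List.getLastD_concat]
    have hlen' : (d ++ [a]).length - 1 = d.length := by simp
    have hlen'' : (d ++ [b]).length - 1 = d.length := by simp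
    rw [hlen'] at hcase
    simp only [hlen', hlen'']
    rw [wordAt_concat_prev bot d b a]
    set w := wordAt bot (d ++ [a]) d.length with hw
    rcases hcase with ⟨hba, hne2, haw⟩ | ⟨hab, hne2, hbw⟩
    · have hbw : b <+: w := hba.trans haw
      rw [if_pos haw, if_pos hbw]
      have : b.length < a.length :=
        lt_of_le_of_ne hba.length_le (fun hle => hne2 (List.IsPrefix.eq_of_length hba hle))
      omega
    · rw [if_neg hbw]
      have hbne : b ≠ [] := fun h => hbw (h ▸ List.nil_prefix)
      have hb1 : 1 ≤ b.length := List.length_pos_iff.mpr hbne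
      have hlt : a.length < b.length :=
        lt_of_le_of_ne hab.length_le (fun hle => hne2 (List.IsPrefix.eq_of_length hab hle))
      by_cases haw : a <+: w
      · rw [if_pos haw]; omega
      · rw [if_neg haw]; omega

theorem ll_eq_or_klt {bot : A} {s t : Stack2 A} (h : ll bot s t) : s = t ∨ Klt bot s t := by
  induction h with
  | refl => exact Or.inl rfl
  | tail hbc hcd ih =>
    have h2 := llBase_klt hcd
    rcases ih with rfl | h1
    · exact Or.inr h2
    · refine Or.inr ?_
      unfold Klt at h1 h2 ⊢
      omega

theorem ll_antisymm {bot : A} {s t : Stack2 A} (h1 : ll bot s t) (h2 : ll bot t s) : s = t := by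
  rcases ll_eq_or_klt h1 with rfl | k1
  · rfl
  rcases ll_eq_or_klt h2 with e | k2
  · exact e.symm
  exfalso; unfold Klt at k1 k2; omega

theorem ll_of_len_lt (bot : A) {s t : Stack2 A} (h : s.length < t.length) : ll bot s t :=
  Relation.ReflTransGen.single (Or.inl h)

theorem llBase_at (bot : A) {s : Stack2 A} {i : ℕ} (hi : i ≤ s.length) {v u : Word A}
    (h : (u <+: v ∧ u ≠ v ∧ v <+: wordAt bot s i) ∨
         (v <+: u ∧ v ≠ u ∧ ¬ u <+: wordAt bot s i)) :
    llBase bot (s.take i ++ [v]) (s.take i ++ [u]) := by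
  right
  refine ⟨by simp, by simp, by simp, ?_⟩
  rw [take_concat_length hi, Nat.add_sub_cancel, wordAt_take_lt bot le_rfl hi]
  simpa using h

theorem ll_desc (bot : A) {s : Stack2 A} {i : ℕ} (hi : i ≤ s.length) {v u : Word A}
    (h1 : u <+: v) (h2 : v <+: wordAt bot s i) :
    ll bot (s.take i ++ [v]) (s.take i ++ [u]) := by
  rcases eq_or_ne u v with rfl | hne
  · exact Relation.ReflTransGen.refl
  · exact Relation.ReflTransGen.single (llBase_at bot hi (Or.inl ⟨h1, hne, h2⟩))

theorem ll_asc (bot : A) {s : Stack2 A} {i : ℕ} (hi : i ≤ s.length) {v u : Word A}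
    (h1 : v <+: u) (h2 : ¬ u <+: wordAt bot s i) :
    ll bot (s.take i ++ [v]) (s.take i ++ [u]) := by
  rcases eq_or_ne v u with rfl | hne
  · exact Relation.ReflTransGen.refl
  · exact Relation.ReflTransGen.single (llBase_at bot hi (Or.inr ⟨h1, hne, h2⟩))

theorem gm_total_at (bot : A) {s : Stack2 A} {i : ℕ} (hi : i ≤ s.length) {v u : Word A}
    (hv1 : lcp (wordAt bot s i) (wordAt bot s (i + 1)) <+: v)
    (hv2 : v <+: wordAt bot s i ∨ v <+: wordAt bot s (i + 1))
    (hu1 : lcp (wordAt bot s i) (wordAt bot s (i + 1)) <+: u)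
    (hu2 : u <+: wordAt bot s i ∨ u <+: wordAt bot s (i + 1)) :
    ll bot (s.take i ++ [v]) (s.take i ++ [u]) ∨
      ll bot (s.take i ++ [u]) (s.take i ++ [v]) := by
  by_cases hvw : v <+: wordAt bot s i <;> by_cases huw : u <+: wordAt bot s i
  · rcases List.prefix_or_prefix_of_prefix hvw huw with h | h
    · exact Or.inr (ll_desc bot hi h huw)
    · exact Or.inl (ll_desc bot hi h hvw)
  · exact Or.inl ((ll_desc bot hi hv1 hvw).trans (ll_asc bot hi hu1 huw))
  · exact Or.inr ((ll_desc bot hi hu1 huw).trans (ll_asc bot hi hv1 hvw))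
  · have hvw' : v <+: wordAt bot s (i + 1) := hv2.resolve_left hvw
    have huw' : u <+: wordAt bot s (i + 1) := hu2.resolve_left huw
    rcases List.prefix_or_prefix_of_prefix hvw' huw' with h | h
    · exact Or.inl (ll_asc bot hi h huw)
    · exact Or.inr (ll_asc bot hi h hvw)

theorem gm_total (bot : A) {s m₁ m₂ : Stack2 A}
    (h1 : GenMilestone bot s m₁) (h2 : GenMilestone bot s m₂) :
    ll bot m₁ m₂ ∨ ll bot m₂ m₁ := by
  obtain ⟨i, v, hi, rfl, hv1, hv2⟩ := h1
  obtain ⟨j, u, hj, rfl, hu1, hu2⟩ := h2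
  rcases lt_trichotomy i j with h | rfl | h
  · refine Or.inl (ll_of_len_lt bot ?_)
    rw [take_concat_length hi.le, take_concat_length hj.le]; omega
  · exact gm_total_at bot hi.le hv1 hv2 hu1 hu2
  · refine Or.inr (ll_of_len_lt bot ?_)
    rw [take_concat_length hi.le, take_concat_length hj.le]; omega

theorem gm_finite (bot : A) (s : Stack2 A) : (genMilestones bot s).Finite := by
  have hsub : genMilestones bot s ⊆
      ⋃ i ∈ Finset.range s.length, (fun v => s.take i ++ [v]) ''
        ({v | v <+: wordAt bot s i} ∪ {v | v <+: wordAt bot s (i + 1)}) := by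
    rintro m ⟨i, v, hi, rfl, _, hv2⟩
    exact Set.mem_biUnion (Finset.mem_coe.mpr (Finset.mem_range.mpr hi)) ⟨v, hv2, rfl⟩
  refine Set.Finite.subset ?_ hsub
  refine Set.Finite.biUnion (Finset.finite_toSet _) fun i _ => ?_
  exact ((prefixSet_finite _).union (prefixSet_finite _)).image _

theorem gm_self (bot : A) {s m : Stack2 A} (h : GenMilestone bot s m) :
    GenMilestone bot m m := by
  obtain ⟨i, v, hi, rfl, hv1, hv2⟩ := h
  refine ⟨i, v, ?_, ?_, ?_, Or.inr ?_⟩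
  · rw [take_concat_length hi.le]; omega
  · rw [take_concat_take le_rfl hi.le]
  · rw [wordAt_take_lt bot le_rfl hi.le, wordAt_take_top bot hi.le]
    exact lcp_prefix_right _ _
  · rw [wordAt_take_top bot hi.le]

theorem gm_initseg_sub (bot : A) {s m m' : Stack2 A}
    (hm : GenMilestone bot s m) (hm' : GenMilestone bot m m') :
    GenMilestone bot s m' ∧ ll bot m' m := by
  obtain ⟨i, v, hi, rfl, hv1, hv2⟩ := hm
  obtain ⟨j, u, hj, hm'eq, hu1, hu2⟩ := hm'
  rw [take_concat_length hi.le] at hj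
  have hj' : j ≤ i := by omega
  rw [take_concat_take hj' hi.le] at hm'eq
  subst hm'eq
  rcases lt_or_eq_of_le hj' with hji | rfl
  · rw [wordAt_take_lt bot hj' hi.le, wordAt_take_lt bot (by omega) hi.le] at hu1 hu2
    refine ⟨⟨j, u, by omega, rfl, hu1, hu2⟩, ll_of_len_lt bot ?_⟩
    rw [take_concat_length (by omega : j ≤ s.length), take_concat_length hi.le]; omega
  · rw [wordAt_take_lt bot le_rfl hi.le, wordAt_take_top bot hi.le] at hu1 hu2
    have hp_lcp : lcp (wordAt bot s j) (wordAt bot s (j + 1)) <+: lcp (wordAt bot s j) v :=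
      prefix_lcp (lcp_prefix_left _ _) hv1
    constructor
    · refine ⟨j, u, hi, rfl, hp_lcp.trans hu1, ?_⟩
      rcases hu2 with h | h
      · exact Or.inl h
      · rcases hv2 with h2 | h2
        · exact Or.inl (h.trans h2)
        · exact Or.inr (h.trans h2)
    · by_cases hvw : v <+: wordAt bot s j
      · have hlcp : lcp (wordAt bot s j) v = v :=
          (lcp_prefix_right _ _).sublist.antisymm (prefix_lcp hvw List.prefix_rfl).sublist
        have hvu : v <+: u := by rw [hlcp] at hu1; exact hu1
        rcases hu2 with h | h
        · exact ll_desc bot hi.le hvu h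
        · have : u = v := h.sublist.antisymm hvu.sublist
          subst this; exact Relation.ReflTransGen.refl
      · by_cases huw : u <+: wordAt bot s j
        · exact (ll_desc bot hi.le hu1 huw).trans
            (ll_asc bot hi.le (lcp_prefix_right _ _) hvw)
        · exact ll_asc bot hi.le (hu2.resolve_left huw) hvw

theorem gm_initseg_sup (bot : A) {s m m' : Stack2 A}
    (hm : GenMilestone bot s m) (hm' : GenMilestone bot s m') (hll : ll bot m' m) :
    GenMilestone bot m m' := by
  rcases ll_eq_or_klt hll with rfl | hk
  · exact gm_self bot hm
  obtain ⟨i, v, hi, rfl, hv1, hv2⟩ := hm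
  obtain ⟨j, u, hj, rfl, hu1, hu2⟩ := hm'
  unfold Klt at hk
  rw [take_concat_length hi.le, take_concat_length hj.le] at hk
  rcases hk with hlt | ⟨heq, hd⟩
  · have hji : j < i := by omega
    refine ⟨j, u, ?_, ?_, ?_, ?_⟩
    · rw [take_concat_length hi.le]; omega
    · rw [take_concat_take (by omega) hi.le]
    · rw [wordAt_take_lt bot (by omega) hi.le, wordAt_take_lt bot (by omega) hi.le]
      exact hu1
    · rw [wordAt_take_lt bot (by omega) hi.le, wordAt_take_lt bot (by omega) hi.le]
      exact hu2
  · have hij : j = i := by omega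
    subst hij
    rw [delta_take bot hi.le, delta_take bot hi.le] at hd
    have hkey : lcp (wordAt bot s j) v <+: u ∧ (u <+: wordAt bot s j ∨ u <+: v) := by
      by_cases hvw : v <+: wordAt bot s j
      · rw [if_pos hvw] at hd
        have huw : u <+: wordAt bot s j := by
          by_contra huw
          rw [if_neg huw] at hd
          have hune : u ≠ [] := fun h => huw (h ▸ List.nil_prefix)
          have hu1' : 1 ≤ u.length := List.length_pos_iff.mpr hune
          omega
        rw [if_pos huw] at hd
        have hvu : v <+: u := List.prefix_of_prefix_length_le hvw huw (by omega)
        have hlcp : lcp (wordAt bot s j) v = v :=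
          (lcp_prefix_right _ _).sublist.antisymm (prefix_lcp hvw List.prefix_rfl).sublist
        exact ⟨by rw [hlcp]; exact hvu, Or.inl huw⟩
      · rw [if_neg hvw] at hd
        have hvw' : v <+: wordAt bot s (j + 1) := hv2.resolve_left hvw
        have hlcp : lcp (wordAt bot s j) v <+: lcp (wordAt bot s j) (wordAt bot s (j + 1)) :=
          prefix_lcp (lcp_prefix_left _ _) ((lcp_prefix_right _ _).trans hvw')
        refine ⟨(hlcp.trans hu1 : _), ?_⟩
        by_cases huw : u <+: wordAt bot s j
        · exact Or.inl huw
        · rw [if_neg huw] at hd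
          have huw' : u <+: wordAt bot s (j + 1) := hu2.resolve_left huw
          exact Or.inr (List.prefix_of_prefix_length_le huw' hvw' (by omega))
    refine ⟨j, u, ?_, ?_, ?_, ?_⟩
    · rw [take_concat_length hi.le]; omega
    · rw [take_concat_take le_rfl hi.le]
    · rw [wordAt_take_lt bot le_rfl hi.le, wordAt_take_top bot hi.le]
      exact hkey.1
    · rw [wordAt_take_lt bot le_rfl hi.le, wordAt_take_top bot hi.le]
      exact hkey.2

end Stack


/-- For each stack `s`, `≪` restricted to `genMilestones(s)` is a
finite linear order, and for `m ∈ genMilestones(s)`, `(genMilestones(m), ≪)` is the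
initial segment of `(genMilestones(s), ≪)` up to `m`. -/
theorem genMilestones_linear_order
    {A : Type} [DecidableEq A] (bot : A) (s : Stack2 A) (hs : IsStack bot s) :
    (genMilestones bot s).Finite ∧
    (∀ m₁ ∈ genMilestones bot s, ∀ m₂ ∈ genMilestones bot s,
      ll bot m₁ m₂ ∨ ll bot m₂ m₁) ∧
    (∀ m₁ ∈ genMilestones bot s, ∀ m₂ ∈ genMilestones bot s,
      ll bot m₁ m₂ → ll bot m₂ m₁ → m₁ = m₂) ∧
    (∀ m ∈ genMilestones bot s,
      genMilestones bot m = {m' ∈ genMilestones bot s | ll bot m' m}) := by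
  refine ⟨gm_finite bot s, ?_, ?_, ?_⟩
  · intro m₁ h₁ m₂ h₂
    exact gm_total bot h₁ h₂
  · intro m₁ _ m₂ _ h1 h2
    exact ll_antisymm h1 h2
  · intro m hm
    ext m'
    simp only [genMilestones, Set.mem_setOf_eq, Set.mem_sep_iff]
    exact ⟨fun h => gm_initseg_sub bot hm h, fun ⟨h1, h2⟩ => gm_initseg_sup bot hm h1 h2⟩

end CPG
end
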